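/- arXiv:2605.19084 — 2 statements merged into one kernel-verified Lean document; each statement's English description precedes it below -/
import Mathlib

section
/- Fix m ≥ 2, b ∈ (0,1), and c ∈ ℝ. For each n large enough that a_n := 1/n − b/(n−1) > 0, let P_n be the coordinate-refresh kernel on (ℤ/mℤ)^n with uniform rates α_k = 1/n for all k, and let Q_n be the coordinate-refresh kernel with rates α_1 := 1/n + b and α_k := a_n for 2 ≤ k ≤ n (these rates sum to 1). Then, with continuous-time separation distances, |s^{Q_n}(a_n^{−1}(log(n−1) + c)) − s^{P_n}(n(log n + c))| → 0 as n → ∞; consequently s^{Q_n}(a_n^{−1}(log(n−1) + c)) → 1 − e^{−e^{−c}}. -/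
open Filter Finset

/-- The coordinate-refresh kernel on `(ℤ/mℤ)^n` with rates `α`. -/
noncomputable def coordRefresh (m n : ℕ) [NeZero m] (α : Fin n → ℝ) :
    Matrix (Fin n → ZMod m) (Fin n → ZMod m) ℝ := fun x y =>
  ∑ k : Fin n, α k * (1 / (m : ℝ)) *
    (if ∀ j : Fin n, j ≠ k → y j = x j then 1 else 0)

/-- The continuous-time separation distance of a coordinate-refresh walk on
`(ℤ/mℤ)^n` (whose stationary distribution is uniform, of mass `m^{-n}`). -/
noncomputable def zmSep (m n : ℕ) [NeZero m] (α : Fin n → ℝ) (t : ℝ) : ℝ :=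
  ⨆ x : Fin n → ZMod m, ⨆ y : Fin n → ZMod m,
    (1 - (m : ℝ) ^ n * (NormedSpace.exp (t • (coordRefresh m n α - 1))) x y)

/-!
The kernel is `P_α = ∑ₖ αₖ Rₖ`, where `Rₖ` resamples coordinate `k` uniformly. The `Rₖ` are
commuting idempotents, `Rₖ` being the Kronecker product of the uniform matrix `U` on `ZMod m` in
slot `k` with identities elsewhere. Hence `exp (t (P_α - 1)) = ∏ₖ (e^{-tαₖ} + (1 - e^{-tαₖ}) Rₖ)` is
the Kronecker product of the matrices `e^{-tαₖ} + (1 - e^{-tαₖ}) U`, and the separation distance is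
attained at two states that differ in every coordinate: `s(t) = 1 - ∏ₖ (1 - e^{-tαₖ})` when all
`tαₖ ≥ 0`. For uniform rates this is `1 - (1 - e^{-c}/n)^n`; for the perturbed rates the `n - 1`
slow coordinates give `(1 - e^{-c}/(n-1))^(n-1)` and the fast one a factor tending to `1`. Both
products tend to `exp (-e^{-c})`.
-/

theorem IsIdempotentElem.exp_smul {A : Type*} [Ring A] [Algebra ℝ A] [TopologicalSpace A]
    [IsTopologicalRing A] [ContinuousSMul ℝ A] [T2Space A] {p : A} (hp : IsIdempotentElem p)
    (s : ℝ) : NormedSpace.exp (s • p) = 1 + (Real.exp s - 1) • p := by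
  have hterm : ∀ k : ℕ, ((k.factorial : ℝ)⁻¹) • (s • p) ^ k
      = ((k.factorial : ℝ)⁻¹ * s ^ k) • p + if k = 0 then 1 - p else 0 := by
    rintro (_ | k)
    · simp
    · simp [smul_pow, hp.pow_succ_eq, smul_smul]
  have hsum : HasSum (fun k : ℕ => ((k.factorial : ℝ)⁻¹) • (s • p) ^ k)
      (Real.exp s • p + (1 - p)) := by
    simp_rw [hterm]
    refine HasSum.add ?_ (hasSum_ite_eq 0 (1 - p))
    exact (Real.exp_eq_exp_ℝ ▸ NormedSpace.exp_series_hasSum_exp' (𝕂 := ℝ) s).smul_const p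
  rw [congrFun (NormedSpace.exp_eq_tsum ℝ) (s • p), hsum.tsum_eq, sub_smul, one_smul]
  abel

theorem IsIdempotentElem.exp_smul_sub_one {A : Type*} [Ring A] [Algebra ℝ A] [TopologicalSpace A]
    [IsTopologicalRing A] [ContinuousSMul ℝ A] [T2Space A] {p : A} (hp : IsIdempotentElem p)
    (s : ℝ) : NormedSpace.exp (s • (p - 1)) = Real.exp (-s) • 1 + (1 - Real.exp (-s)) • p := by
  rw [show s • (p - 1) = (-s) • (1 - p) by module, hp.one_sub.exp_smul]
  module

namespace Matrix

variable {ι R : Type*} [Fintype ι] [DecidableEq ι] [CommSemiring R]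
  {X : ι → Type*} [∀ i, Fintype (X i)] [∀ i, DecidableEq (X i)]

def piKron : ((i : ι) → Matrix (X i) (X i) R) →* Matrix ((i : ι) → X i) ((i : ι) → X i) R where
  toFun A := of fun x y => ∏ i, A i (x i) (y i)
  map_one' := by
    ext x y
    simp [one_apply, Fintype.prod_boole, funext_iff]
  map_mul' A B := by
    ext x y
    simp [mul_apply, Fintype.prod_sum, prod_mul_distrib]

@[simp]
theorem piKron_apply (A : (i : ι) → Matrix (X i) (X i) R) (x y : (i : ι) → X i) :
    piKron A x y = ∏ i, A i (x i) (y i) := rfl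

theorem piKron_mulSingle_apply (k : ι) (B : Matrix (X k) (X k) R) (x y : (i : ι) → X i) :
    piKron (Pi.mulSingle k B) x y = B (x k) (y k) * if ∀ j, j ≠ k → y j = x j then 1 else 0 := by
  rw [piKron_apply, ← mul_prod_erase _ _ (mem_univ k), Pi.mulSingle_eq_same]
  congr 1
  calc _ = ∏ j ∈ univ.erase k, if y j = x j then (1 : R) else 0 :=
        prod_congr rfl fun j hj => by
          simp only [Pi.mulSingle_eq_of_ne (ne_of_mem_erase hj), one_apply, eq_comm]
    _ = _ := by simp [prod_boole]

def piKronSingle (k : ι) : Matrix (X k) (X k) R →ₐ[R] Matrix ((i : ι) → X i) ((i : ι) → X i) R :=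
  AlgHom.ofLinearMap
    { toFun B := piKron (Pi.mulSingle k B)
      map_add' B C := by ext; simp only [piKron_mulSingle_apply, add_apply, add_mul]
      map_smul' c B := by
        ext
        simp only [piKron_mulSingle_apply, smul_apply, smul_eq_mul, RingHom.id_apply, mul_assoc] }
    (by simp) (fun B C => by simp [Pi.mulSingle_mul])

theorem piKronSingle_eq_piKron (k : ι) (B : Matrix (X k) (X k) R) :
    piKronSingle k B = piKron (Pi.mulSingle k B) := rfl

theorem piKronSingle_apply (k : ι) (B : Matrix (X k) (X k) R) (x y : (i : ι) → X i) :
    piKronSingle k B x y = B (x k) (y k) * if ∀ j, j ≠ k → y j = x j then 1 else 0 :=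
  piKron_mulSingle_apply k B x y

theorem piKronSingle_commute {j k : ι} (hjk : j ≠ k) (B : Matrix (X j) (X j) R)
    (C : Matrix (X k) (X k) R) : Commute (piKronSingle j B) (piKronSingle k C) := by
  rw [piKronSingle_eq_piKron, piKronSingle_eq_piKron]
  exact (Pi.mulSingle_commute hjk B C).map piKron

theorem noncommProd_piKronSingle (B : (i : ι) → Matrix (X i) (X i) R) :
    univ.noncommProd (fun k => piKronSingle k (B k))
      (fun j _ k _ hjk => piKronSingle_commute hjk (B j) (B k)) = piKron B := by
  conv_rhs => rw [← noncommProd_mulSingle B]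
  exact (map_noncommProd univ (fun i => Pi.mulSingle i (B i)) _ (piKron (R := R) (X := X))).symm

end Matrix

section CoordRefresh

open Matrix

variable {m n : ℕ} [NeZero m]

variable (m) in
noncomputable def uniformRefresh : Matrix (ZMod m) (ZMod m) ℝ := of fun _ _ => 1 / (m : ℝ)

theorem isIdempotentElem_uniformRefresh : IsIdempotentElem (uniformRefresh m) := by
  ext x y
  have : (m : ℝ) ≠ 0 := NeZero.ne _
  simp only [uniformRefresh, one_div, mul_apply, of_apply, sum_const, card_univ, ZMod.card,
    nsmul_eq_mul]
  field_simp

theorem coordRefresh_eq_sum (α : Fin n → ℝ) :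
    coordRefresh m n α = ∑ k, α k • piKronSingle k (uniformRefresh m) := by
  ext x y
  simp [coordRefresh, Matrix.sum_apply, piKronSingle_apply, uniformRefresh]

theorem exp_smul_coordRefresh_sub_one {α : Fin n → ℝ} (hα : ∑ k, α k = 1) (t : ℝ) :
    NormedSpace.exp (t • (coordRefresh m n α - 1)) = piKron fun k =>
      Real.exp (-(t * α k)) • 1 + (1 - Real.exp (-(t * α k))) • uniformRefresh m := by
  have hsum : t • (coordRefresh m n α - 1)
      = ∑ k, (t * α k) • (piKronSingle k (uniformRefresh m) - 1) := by
    simp only [coordRefresh_eq_sum, smul_sub, Finset.smul_sum, sum_sub_distrib, smul_smul,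
      ← Finset.sum_smul, ← Finset.mul_sum, hα, mul_one]
  rw [hsum, Matrix.exp_sum_of_commute]
  · rw [← noncommProd_piKronSingle]
    refine noncommProd_congr rfl (fun k _ => ?_) _
    have hR : IsIdempotentElem (piKronSingle (X := fun _ => ZMod m) k (uniformRefresh m)) :=
      isIdempotentElem_uniformRefresh.map _
    rw [hR.exp_smul_sub_one, map_add, map_smul, map_smul, map_one]
  · intro j _ k _ hjk
    exact (((piKronSingle_commute hjk _ _).sub_right (Commute.one_right _)).sub_left
      ((Commute.one_left _).sub_right (Commute.one_left _))).smul_left _ |>.smul_right _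

theorem pow_mul_exp_smul_coordRefresh_sub_one_apply {α : Fin n → ℝ} (hα : ∑ k, α k = 1) (t : ℝ)
    (x y : Fin n → ZMod m) :
    (m : ℝ) ^ n * NormedSpace.exp (t • (coordRefresh m n α - 1)) x y = ∏ k,
      ((m : ℝ) * Real.exp (-(t * α k)) * (if x k = y k then 1 else 0) +
        (1 - Real.exp (-(t * α k)))) := by
  have hm : (m : ℝ) ≠ 0 := NeZero.ne _
  rw [exp_smul_coordRefresh_sub_one hα, piKron_apply, ← Fin.prod_const n (m : ℝ),
    ← prod_mul_distrib]
  refine prod_congr rfl fun k _ => ?_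
  simp only [Matrix.add_apply, Matrix.smul_apply, one_apply, uniformRefresh, of_apply, smul_eq_mul]
  field_simp

theorem zmSep_eq_one_sub_prod (hm : 2 ≤ m) {α : Fin n → ℝ} (hα : ∑ k, α k = 1) {t : ℝ}
    (ht : ∀ k, 0 ≤ t * α k) :
    zmSep m n α t = 1 - ∏ k, (1 - Real.exp (-(t * α k))) := by
  have : Fact (1 < m) := ⟨hm⟩
  have hfactor : ∀ k, 0 ≤ 1 - Real.exp (-(t * α k)) := fun k => by
    simpa using Real.exp_le_one_iff.2 (neg_nonpos.2 (ht k))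
  have hle : ∀ x y : Fin n → ZMod m, ∏ k, (1 - Real.exp (-(t * α k))) ≤
      (m : ℝ) ^ n * NormedSpace.exp (t • (coordRefresh m n α - 1)) x y := fun x y => by
    rw [pow_mul_exp_smul_coordRefresh_sub_one_apply hα]
    exact prod_le_prod (fun k _ => hfactor k) fun k _ => le_add_of_nonneg_left (by positivity)
  have heq : (m : ℝ) ^ n * NormedSpace.exp (t • (coordRefresh m n α - 1)) 0 1 =
      ∏ k, (1 - Real.exp (-(t * α k))) := by
    simp [pow_mul_exp_smul_coordRefresh_sub_one_apply hα]
  refine le_antisymm (ciSup_le fun x => ciSup_le fun y => by linarith [hle x y]) ?_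
  exact le_ciSup_of_le (Set.finite_range _).bddAbove 0
    (le_ciSup_of_le (Set.finite_range _).bddAbove 1 (by rw [heq]))

end CoordRefresh

open Real Topology

theorem Real.exp_neg_log_add {x : ℝ} (hx : 0 < x) (c : ℝ) : exp (-(log x + c)) = exp (-c) / x := by
  rw [neg_add, exp_add, exp_neg (log x), exp_log hx, inv_mul_eq_div]

theorem tendsto_one_sub_div_pow (a : ℝ) :
    Tendsto (fun n : ℕ => (1 - a / n) ^ n) atTop (𝓝 (exp (-a))) := by
  simpa [neg_div, ← sub_eq_add_neg] using tendsto_one_add_div_pow_exp (-a)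

theorem tendsto_one_sub_div_sub_one_pow (a : ℝ) :
    Tendsto (fun n : ℕ => (1 - a / ((n : ℝ) - 1)) ^ (n - 1)) atTop (𝓝 (exp (-a))) := by
  refine ((tendsto_one_sub_div_pow a).comp (tendsto_sub_atTop_nat 1)).congr' ?_
  filter_upwards [eventually_ge_atTop 1] with n hn
  simp [Nat.cast_sub hn]

section Profiles

variable {m : ℕ} [NeZero m] {b : ℝ}

theorem tendsto_zmSep_uniform (hm : 2 ≤ m) (c : ℝ) :
    Tendsto (fun n : ℕ => zmSep m n (fun _ => 1 / n) (n * (log n + c))) atTop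
      (𝓝 (1 - exp (-exp (-c)))) := by
  refine (tendsto_const_nhds.sub (tendsto_one_sub_div_pow _)).congr' ?_
  filter_upwards [eventually_gt_atTop 0,
    tendsto_natCast_atTop_atTop.eventually_ge_atTop (exp (-c))] with n hn hnc
  have hn' : (0 : ℝ) < n := by exact_mod_cast hn
  have hrate : (n : ℝ) * (log n + c) * (1 / n) = log n + c := by field_simp
  have hlog : 0 ≤ log n + c := by linarith [(le_log_iff_exp_le hn').2 hnc]
  have hsum : ∑ _k : Fin n, 1 / (n : ℝ) = 1 := by
    rw [sum_const, card_univ, Fintype.card_fin, nsmul_eq_mul]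
    field_simp
  rw [zmSep_eq_one_sub_prod hm hsum fun _ => hrate.symm ▸ hlog, hrate,
    exp_neg_log_add hn', prod_const, card_univ, Fintype.card_fin]

-- `a_n` of the paper; the paper's fast coordinate `1` is `0 : Fin n` here.
noncomputable def perturbedRate (b : ℝ) (n : ℕ) : ℝ := 1 / (n : ℝ) - b / ((n : ℝ) - 1)

noncomputable def perturbedRates (b : ℝ) (n : ℕ) : Fin n → ℝ :=
  fun k => if (k : ℕ) = 0 then 1 / n + b else perturbedRate b n

noncomputable def perturbedTime (b c : ℝ) (n : ℕ) : ℝ :=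
  (perturbedRate b n)⁻¹ * (log ((n : ℝ) - 1) + c)

theorem eventually_perturbedRate_pos (hb : b < 1) : ∀ᶠ n : ℕ in atTop, 0 < perturbedRate b n := by
  filter_upwards [eventually_ge_atTop 2,
    tendsto_natCast_atTop_atTop.eventually_gt_atTop (1 - b)⁻¹] with n hn2 hnb
  have hn : (2 : ℝ) ≤ n := by exact_mod_cast hn2
  have : 1 < (1 - b) * n := by rwa [inv_lt_iff_one_lt_mul₀' (sub_pos.2 hb)] at hnb
  rw [perturbedRate, sub_pos, div_lt_div_iff₀ (by linarith) (by linarith)]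
  linarith

theorem sum_perturbedRates {n : ℕ} (hn : 2 ≤ n) (b : ℝ) : ∑ k, perturbedRates b n k = 1 := by
  obtain ⟨n, rfl⟩ : ∃ n', n = n' + 1 := ⟨n - 1, by omega⟩
  have hn' : (n : ℝ) ≠ 0 := by norm_cast; omega
  rw [Fin.sum_univ_succ]
  simp only [perturbedRates, perturbedRate, Fin.val_zero, Fin.val_succ, Nat.add_one_ne_zero,
    ↓reduceIte, sum_const, card_univ, Fintype.card_fin, nsmul_eq_mul]
  push_cast [add_sub_cancel_right]
  field_simp
  ring

theorem perturbedTime_mul_perturbedRate {n : ℕ} (c : ℝ) (ha : perturbedRate b n ≠ 0) :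
    perturbedTime b c n * perturbedRate b n = log ((n : ℝ) - 1) + c := by
  rw [perturbedTime, mul_right_comm, inv_mul_cancel₀ ha, one_mul]

theorem perturbedRates_nonneg {n : ℕ} (hb : 0 ≤ b) (ha : 0 ≤ perturbedRate b n) (k : Fin n) :
    0 ≤ perturbedRates b n k := by
  unfold perturbedRates
  split_ifs
  exacts [by positivity, ha]

theorem zmSep_perturbed_eventuallyEq (hm : 2 ≤ m) (hb0 : 0 ≤ b) (hb1 : b < 1) (c : ℝ) :
    (fun n => zmSep m n (perturbedRates b n) (perturbedTime b c n)) =ᶠ[atTop] fun n =>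
      1 - (1 - exp (-(perturbedTime b c n * (1 / n + b)))) *
        (1 - exp (-c) / ((n : ℝ) - 1)) ^ (n - 1) := by
  have hsub : Tendsto (fun n : ℕ => (n : ℝ) - 1) atTop atTop :=
    tendsto_atTop_add_const_right _ (-1) tendsto_natCast_atTop_atTop
  filter_upwards [eventually_ge_atTop 2, eventually_perturbedRate_pos hb1,
    hsub.eventually_ge_atTop (exp (-c))] with n hn ha hnc
  have hn1 : (0 : ℝ) < n - 1 := by
    have : (2 : ℝ) ≤ n := by exact_mod_cast hn
    linarith
  have hL : 0 ≤ log ((n : ℝ) - 1) + c := by linarith [(le_log_iff_exp_le hn1).2 hnc]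
  have hT := perturbedTime_mul_perturbedRate c ha.ne'
  have hT0 : 0 ≤ perturbedTime b c n := mul_nonneg (inv_nonneg.2 ha.le) hL
  rw [zmSep_eq_one_sub_prod hm (sum_perturbedRates hn b)
    fun k => mul_nonneg hT0 (perturbedRates_nonneg hb0 ha.le k)]
  obtain ⟨n, rfl⟩ : ∃ n', n = n' + 1 := ⟨n - 1, by omega⟩
  simp only [Fin.prod_univ_succ, perturbedRates, Fin.val_zero, Fin.val_succ, Nat.add_one_ne_zero,
    ↓reduceIte, hT, exp_neg_log_add hn1, prod_const, card_univ, Fintype.card_fin,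
    Nat.add_sub_cancel]

theorem tendsto_perturbedTime_mul_atTop (hb0 : 0 ≤ b) (hb1 : b < 1) (c : ℝ) :
    Tendsto (fun n : ℕ => perturbedTime b c n * (1 / n + b)) atTop atTop := by
  have hlog : Tendsto (fun n : ℕ => log ((n : ℝ) - 1) + c) atTop atTop :=
    tendsto_atTop_add_const_right _ c (tendsto_log_atTop.comp
      (tendsto_atTop_add_const_right _ (-1) tendsto_natCast_atTop_atTop))
  refine tendsto_atTop_mono' _ ?_ hlog
  filter_upwards [eventually_ge_atTop 1, eventually_perturbedRate_pos hb1,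
    hlog.eventually_ge_atTop 0] with n hn ha hL
  have hrate : perturbedRate b n ≤ 1 / n + b := by
    have : 0 ≤ b / ((n : ℝ) - 1) := div_nonneg hb0 (by simpa using hn)
    rw [perturbedRate]
    linarith
  calc log ((n : ℝ) - 1) + c = perturbedTime b c n * perturbedRate b n :=
        (perturbedTime_mul_perturbedRate c ha.ne').symm
    _ ≤ perturbedTime b c n * (1 / n + b) :=
        mul_le_mul_of_nonneg_left hrate (mul_nonneg (inv_nonneg.2 ha.le) hL)

theorem tendsto_zmSep_perturbed (hm : 2 ≤ m) (hb0 : 0 ≤ b) (hb1 : b < 1) (c : ℝ) :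
    Tendsto (fun n => zmSep m n (perturbedRates b n) (perturbedTime b c n)) atTop
      (𝓝 (1 - exp (-exp (-c)))) := by
  have hfirst := tendsto_exp_neg_atTop_nhds_zero.comp (tendsto_perturbedTime_mul_atTop hb0 hb1 c)
  have h := (tendsto_const_nhds (x := (1 : ℝ))).sub (((tendsto_const_nhds (x := (1 : ℝ))).sub
    hfirst).mul (tendsto_one_sub_div_sub_one_pow (exp (-c))))
  rw [sub_zero, one_mul] at h
  exact h.congr' (zmSep_perturbed_eventuallyEq hm hb0 hb1 c).symm

end Profiles

theorem perturbed_zm_walk_profile (m : ℕ) [NeZero m] (hm : 2 ≤ m) (b : ℝ)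
    (hb : b ∈ Set.Ioo (0 : ℝ) 1) (c : ℝ) :
    Tendsto (fun n : ℕ =>
        |zmSep m n (fun k => if (k : ℕ) = 0 then 1 / n + b else 1 / n - b / ((n : ℝ) - 1))
            ((1 / (n : ℝ) - b / ((n : ℝ) - 1))⁻¹ * (Real.log ((n : ℝ) - 1) + c)) -
          zmSep m n (fun _ => 1 / n) ((n : ℝ) * (Real.log n + c))|) atTop (nhds 0) ∧
    Tendsto (fun n : ℕ =>
        zmSep m n (fun k => if (k : ℕ) = 0 then 1 / n + b else 1 / n - b / ((n : ℝ) - 1))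
          ((1 / (n : ℝ) - b / ((n : ℝ) - 1))⁻¹ * (Real.log ((n : ℝ) - 1) + c)))
      atTop (nhds (1 - Real.exp (-Real.exp (-c)))) := by
  have hQ := tendsto_zmSep_perturbed hm hb.1.le hb.2 c
  have hdiff := (hQ.sub (tendsto_zmSep_uniform hm c)).abs
  rw [sub_self, abs_zero] at hdiff
  exact ⟨hdiff, hQ⟩
end

section
/- For even n ≥ 2 put N := n/2 and let P_n be the Bernoulli–Laplace kernel on {0,1,…,N}. Let s_{n,N}(t) := max_{y} (1 − exp(t(P_n − I))(N,y)/π_n(y)) be the continuous-time separation distance started from the endpoint state N. If along a strictly increasing sequence of even integers n, s_{n,N}((n/4)(log n + c)) converges as n → ∞ for every c ∈ ℝ, to a limit Φ(c), then Φ is continuous on ℝ. -/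
open Filter Finset

/-- The Bernoulli–Laplace kernel on `{0,1,…,N}` (two urns of size `N`;
the state records the number of red balls in the left urn). -/
noncomputable def BLKernel (N : ℕ) : Matrix (Fin (N + 1)) (Fin (N + 1)) ℝ :=
  fun x y =>
    if (y : ℕ) + 1 = (x : ℕ) then ((x : ℝ) / N) ^ 2
    else if (y : ℕ) = (x : ℕ) + 1 then (((N : ℝ) - (x : ℕ)) / N) ^ 2
    else if y = x then 2 * (x : ℕ) * ((N : ℝ) - (x : ℕ)) / N ^ 2
    else 0

/-- The hypergeometric stationary distribution of the Bernoulli–Laplace chain. -/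
noncomputable def BLpi (N : ℕ) (x : Fin (N + 1)) : ℝ :=
  ((N.choose x : ℝ)) ^ 2 / ((2 * N).choose N : ℝ)

/-- The continuous-time separation distance of the Bernoulli–Laplace chain
started from the endpoint state `N`. -/
noncomputable def BLsepEndpoint (N : ℕ) (t : ℝ) : ℝ :=
  ⨆ y : Fin (N + 1),
    (1 - (NormedSpace.exp (t • (BLKernel N - 1))) (Fin.last N) y / BLpi N y)

/-!
By reversibility, `H_t(N, y) / π(y) = H_t(y, N) / π(N)`, so the separation distance only sees
the column `h_t = H_t(·, N)` (`heatCol N t`). This column is nondecreasing and convex in `y`: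
the lazy kernel `L = (P + I) / 2` preserves both properties, `e_N` has them, and
`H_t = e^{-2t} ∑ₖ (2t)ᵏ / k! • Lᵏ`. Monotonicity makes the separation equal to
`σ(t) = 1 - h_t(0) / π(N)`. Since `P(0, ·)` is the point mass at `1`,
`σ' = -(h_t(1) - h_t(0)) / π(N) ≤ 0`, and averaging the convexity bound
`h_t(y) - h_t(0) ≥ y (h_t(1) - h_t(0))` against `π` (mean `N / 2`, and `∑ π h_t = π(N)`) gives
`σ' ≥ -(2 / N) σ`. So `σ` is nonincreasing and `e^{2t/N} σ(t)` nondecreasing. At the times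
`t = (N / 2) (log 2N + c)` these pass to the limit as `Φ` antitone with
`e^{a - b} Φ(a) ≤ Φ(b)` for `a ≤ b`, which together with `Φ ≤ 1` makes `Φ` 1-Lipschitz.
-/

namespace Matrix

variable {ι : Type*} [DecidableEq ι]

def IsReversible (π : ι → ℝ) (A : Matrix ι ι ℝ) : Prop :=
  ∀ x y, π x * A x y = π y * A y x

theorem IsReversible.smul_sub_one {π : ι → ℝ} {A : Matrix ι ι ℝ} (h : IsReversible π A)
    (t : ℝ) : IsReversible π (t • (A - 1)) := by
  intro x y
  rcases eq_or_ne x y with rfl | hxy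
  · rfl
  · simp [one_apply_ne hxy, one_apply_ne hxy.symm, mul_left_comm _ t, h x y]

variable [Fintype ι]

theorem IsReversible.exp {π : ι → ℝ} (hπ : ∀ i, π i ≠ 0) {A : Matrix ι ι ℝ}
    (h : IsReversible π A) : IsReversible π (NormedSpace.exp A) := by
  have hU : IsUnit (diagonal π) := isUnit_diagonal.2 (Pi.isUnit_iff.2 fun i => (hπ i).isUnit)
  have hconj : Aᵀ = diagonal π * A * (diagonal π)⁻¹ := by
    have hD : diagonal π * A = Aᵀ * diagonal π := by
      ext x y
      simp [diagonal_mul, mul_diagonal, h x y, mul_comm]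
    rw [hD, mul_assoc, mul_nonsing_inv _ ((isUnit_iff_isUnit_det _).mp hU), mul_one]
  have hE : (NormedSpace.exp A)ᵀ * diagonal π = diagonal π * NormedSpace.exp A := by
    rw [← exp_transpose, hconj, exp_conj _ _ hU, mul_assoc,
      nonsing_inv_mul _ ((isUnit_iff_isUnit_det _).mp hU), mul_one]
  intro x y
  simpa [diagonal_mul, mul_diagonal, mul_comm] using (congr_fun (congr_fun hE x) y).symm

theorem map_exp_eq_tsum (φ : Matrix ι ι ℝ →ₗ[ℝ] ℝ) (A : Matrix ι ι ℝ) :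
    φ (NormedSpace.exp A) = ∑' k : ℕ, (k.factorial : ℝ)⁻¹ * φ (A ^ k) := by
  let _ : NormedRing (Matrix ι ι ℝ) := Matrix.linftyOpNormedRing
  let _ : NormedAlgebra ℝ (Matrix ι ι ℝ) := Matrix.linftyOpNormedAlgebra
  have h := (LinearMap.toContinuousLinearMap φ).map_tsum
    (NormedSpace.expSeries_summable' (𝕂 := ℝ) A)
  rw [NormedSpace.exp_eq_tsum ℝ]
  simpa using h

theorem exp_mulVec_of_mulVec_eq_zero {A : Matrix ι ι ℝ} {v : ι → ℝ} (hA : A *ᵥ v = 0) :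
    NormedSpace.exp A *ᵥ v = v := by
  ext i
  have h := map_exp_eq_tsum (LinearMap.proj i ∘ₗ (mulVecBilin ℝ ℝ).flip v) A
  simp only [LinearMap.comp_apply, LinearMap.flip_apply, mulVecBilin_apply,
    LinearMap.proj_apply] at h
  rw [h, tsum_eq_single 0 fun k hk => ?_]
  · simp
  · obtain ⟨k, rfl⟩ := Nat.exists_eq_succ_of_ne_zero hk
    simp [pow_succ, ← mulVec_mulVec, hA]

theorem exp_smul_mulVec_nonneg_of_invariant {L : Matrix ι ι ℝ} {p : (ι → ℝ) → Prop}
    (hL : ∀ w, p w → p (L *ᵥ w)) {v : ι → ℝ} (hv : p v) (ψ : (ι → ℝ) →ₗ[ℝ] ℝ)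
    (hψ : ∀ w, p w → 0 ≤ ψ w) {s : ℝ} (hs : 0 ≤ s) :
    0 ≤ ψ (NormedSpace.exp (s • L) *ᵥ v) := by
  have hpow : ∀ k : ℕ, p (L ^ k *ᵥ v) := by
    intro k
    induction k with
    | zero => simpa using hv
    | succ k ih => simpa [pow_succ', ← mulVec_mulVec] using hL _ ih
  have h := map_exp_eq_tsum (ψ ∘ₗ (mulVecBilin ℝ ℝ).flip v) (s • L)
  simp only [LinearMap.comp_apply, LinearMap.flip_apply, mulVecBilin_apply] at h
  rw [h]
  refine tsum_nonneg fun k => ?_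
  rw [smul_pow, smul_mulVec, map_smul, smul_eq_mul]
  exact mul_nonneg (by positivity) (mul_nonneg (pow_nonneg hs k) (hψ _ (hpow k)))

theorem exp_smul_sub_one (s : ℝ) (L : Matrix ι ι ℝ) :
    NormedSpace.exp (s • (L - 1)) = Real.exp (-s) • NormedSpace.exp (s • L) := by
  let _ : NormedRing (Matrix ι ι ℝ) := Matrix.linftyOpNormedRing
  let _ : NormedAlgebra ℝ (Matrix ι ι ℝ) := Matrix.linftyOpNormedAlgebra
  have hcomm : Commute ((-s) • (1 : Matrix ι ι ℝ)) (s • L) :=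
    ((Commute.one_left L).smul_left _).smul_right _
  have hscalar : NormedSpace.exp ((-s) • (1 : Matrix ι ι ℝ)) = Real.exp (-s) • 1 := by
    rw [← Algebra.algebraMap_eq_smul_one, Real.exp_eq_exp_ℝ, ← Algebra.algebraMap_eq_smul_one]
    exact (NormedSpace.algebraMap_exp_comm _).symm
  rw [smul_sub, sub_eq_neg_add, ← neg_smul, exp_add_of_commute _ _ hcomm, hscalar,
    smul_mul_assoc, one_mul]

theorem hasDerivAt_exp_smul_mulVec (A : Matrix ι ι ℝ) (v : ι → ℝ) (t : ℝ) :
    HasDerivAt (fun u : ℝ => NormedSpace.exp (u • A) *ᵥ v)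
      (A *ᵥ (NormedSpace.exp (t • A) *ᵥ v)) t := by
  let _ : NormedRing (Matrix ι ι ℝ) := Matrix.linftyOpNormedRing
  let _ : NormedAlgebra ℝ (Matrix ι ι ℝ) := Matrix.linftyOpNormedAlgebra
  rw [mulVec_mulVec]
  exact (LinearMap.toContinuousLinearMap ((mulVecBilin ℝ ℝ).flip v)).hasFDerivAt.comp_hasDerivAt
    t (hasDerivAt_exp_smul_const' (𝕂 := ℝ) A t)

end Matrix

theorem monotoneOn_exp_mul_of_hasDerivAt {g g' : ℝ → ℝ} {a c : ℝ}
    (hg : ∀ u, HasDerivAt g (g' u) u) (hg' : ∀ u, a < u → -(c * g u) ≤ g' u) :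
    MonotoneOn (fun u => Real.exp (c * u) * g u) (Set.Ici a) := by
  have hderiv : ∀ u, HasDerivAt (fun u => Real.exp (c * u) * g u)
      (Real.exp (c * u) * (c * g u + g' u)) u := fun u => by
    refine (((hasDerivAt_id u).const_mul c).exp.mul (hg u)).congr_deriv ?_
    simp only [id, mul_one]
    ring
  refine monotoneOn_of_hasDerivWithinAt_nonneg (convex_Ici a)
    (fun u _ => (hderiv u).continuousAt.continuousWithinAt)
    (fun u _ => (hderiv u).hasDerivWithinAt) fun u hu => ?_
  rw [interior_Ici] at hu
  exact mul_nonneg (Real.exp_pos _).le (by linarith [hg' u hu])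

theorem lipschitzWith_one_of_antitone_of_exp_sub_mul_le {Φ : ℝ → ℝ} (hanti : Antitone Φ)
    (hle : ∀ a, Φ a ≤ 1) (hexp : ∀ a b, a ≤ b → Real.exp (a - b) * Φ a ≤ Φ b) :
    LipschitzWith 1 Φ := by
  have key : ∀ a b, a ≤ b → dist (Φ a) (Φ b) ≤ dist a b := by
    intro a b hab
    have h1 : 0 ≤ 1 - Real.exp (a - b) := by
      rw [sub_nonneg]; exact Real.exp_le_one_iff.2 (by linarith)
    rw [Real.dist_eq, Real.dist_eq, abs_of_nonneg (sub_nonneg.2 (hanti hab)),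
      abs_of_nonpos (by linarith)]
    nlinarith [Real.add_one_le_exp (a - b), hexp a b hab, mul_le_mul_of_nonneg_right (hle a) h1]
  refine LipschitzWith.of_dist_le_mul fun a b => ?_
  rw [NNReal.coe_one, one_mul]
  rcases le_total a b with hab | hba
  · exact key a b hab
  · rw [dist_comm, dist_comm a]
    exact key b a hba

/-- Clamping the index keeps the neighbours `x - 1` and `x + 1` of a state `x ≤ N` in range
(with `0 - 1 = 0` in `ℕ`); at `x = 0` and `x = N` the kernel gives them weight zero anyway. -/
def clampSeq {N : ℕ} (w : Fin (N + 1) → ℝ) (i : ℕ) : ℝ := w (Fin.clamp i N)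

theorem clampSeq_of_le {N : ℕ} (w : Fin (N + 1) → ℝ) {i : ℕ} (hi : i ≤ N) :
    clampSeq w i = w ⟨i, Nat.lt_succ_of_le hi⟩ := by
  rw [clampSeq]
  congr
  ext
  simp [hi]

theorem clampSeq_val {N : ℕ} (w : Fin (N + 1) → ℝ) (y : Fin (N + 1)) :
    clampSeq w y = w y :=
  clampSeq_of_le w (Nat.lt_succ_iff.mp y.isLt)

theorem clampSeq_zero {N : ℕ} (w : Fin (N + 1) → ℝ) : clampSeq w 0 = w 0 :=
  clampSeq_val w 0

theorem Monotone.clampSeq {N : ℕ} {w : Fin (N + 1) → ℝ} (hw : Monotone w) :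
    Monotone (clampSeq w) :=
  hw.comp Fin.clamp_monotone

def ConvexUpTo (N : ℕ) (u : ℕ → ℝ) : Prop :=
  ∀ i, i + 2 ≤ N → 2 * u (i + 1) ≤ u i + u (i + 2)

theorem ConvexUpTo.mul_sub_le {N : ℕ} {u : ℕ → ℝ} (hu : ConvexUpTo N u) {i : ℕ}
    (hi : i ≤ N) : i * (u 1 - u 0) ≤ u i - u 0 := by
  have hslope : ∀ j, j + 1 ≤ N → u 1 - u 0 ≤ u (j + 1) - u j := by
    intro j hj
    induction j with
    | zero => rfl
    | succ j ih => linarith [ih (by omega), hu j (by omega)]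
  induction i with
  | zero => simp
  | succ i ih =>
    push_cast
    linarith [ih (by omega), hslope i hi]

noncomputable def blRow (n x a b c : ℝ) : ℝ :=
  (x / n) ^ 2 * a + 2 * x * (n - x) / n ^ 2 * b + ((n - x) / n) ^ 2 * c

theorem blRow_nonneg {n x a b c : ℝ} (hx : 0 ≤ x) (hxn : x ≤ n) (ha : 0 ≤ a) (hb : 0 ≤ b)
    (hc : 0 ≤ c) : 0 ≤ blRow n x a b c := by
  have := sub_nonneg.2 hxn
  unfold blRow
  positivity

theorem blRow_const {n x : ℝ} (hn : n ≠ 0) (a : ℝ) : blRow n x a a a = a := by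
  unfold blRow
  field_simp
  ring

theorem blRow_step_mono {n x u₀ u₁ u₂ u₃ : ℝ} (hx : 0 ≤ x) (hxn : x + 1 ≤ n)
    (h₀ : u₀ ≤ u₁) (h₁ : u₁ ≤ u₂) (h₂ : u₂ ≤ u₃) :
    u₁ + blRow n x u₀ u₁ u₂ ≤ u₂ + blRow n (x + 1) u₁ u₂ u₃ := by
  have hn : n ≠ 0 := by linarith
  -- Without the added `u₁`, `u₂` (laziness) the middle coefficient would be `1 - …`,
  -- which is negative at `x = 0`.
  have hid : u₂ + blRow n (x + 1) u₁ u₂ u₃ - (u₁ + blRow n x u₀ u₁ u₂) =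
      ((n - x - 1) ^ 2 * (u₃ - u₂) + x ^ 2 * (u₁ - u₀)) / n ^ 2
        + (2 - ((x + 1) ^ 2 + (n - x) ^ 2) / n ^ 2) * (u₂ - u₁) := by
    unfold blRow; field_simp; ring
  have hcoef : 0 ≤ 2 - ((x + 1) ^ 2 + (n - x) ^ 2) / n ^ 2 := by
    rw [sub_nonneg, div_le_iff₀ (by positivity)]
    nlinarith
  have := sub_nonneg.2 h₀
  have := sub_nonneg.2 h₁
  have := sub_nonneg.2 h₂
  rw [← sub_nonneg, hid]
  positivity

theorem blRow_step_convex {n x u₀ u₁ u₂ u₃ u₄ : ℝ} (hx : 0 ≤ x) (hxn : x + 2 ≤ n)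
    (h₀ : 0 ≤ x ^ 2 * (u₂ - 2 * u₁ + u₀)) (h₁ : 0 ≤ u₃ - 2 * u₂ + u₁)
    (h₂ : 0 ≤ (n - x - 2) ^ 2 * (u₄ - 2 * u₃ + u₂)) :
    2 * (u₂ + blRow n (x + 1) u₁ u₂ u₃)
      ≤ (u₁ + blRow n x u₀ u₁ u₂) + (u₃ + blRow n (x + 2) u₂ u₃ u₄) := by
  have hn : n ≠ 0 := by linarith
  have hid : (u₁ + blRow n x u₀ u₁ u₂) + (u₃ + blRow n (x + 2) u₂ u₃ u₄)
      - 2 * (u₂ + blRow n (x + 1) u₁ u₂ u₃) =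
      ((n - x - 2) ^ 2 * (u₄ - 2 * u₃ + u₂) + x ^ 2 * (u₂ - 2 * u₁ + u₀)) / n ^ 2
        + (2 - ((x + 1) ^ 2 + 2 * (x + 1) - 1 + (n - x) ^ 2) / n ^ 2)
          * (u₃ - 2 * u₂ + u₁) := by
    unfold blRow; field_simp; ring
  have hcoef : 0 ≤ 2 - ((x + 1) ^ 2 + 2 * (x + 1) - 1 + (n - x) ^ 2) / n ^ 2 := by
    rw [sub_nonneg, div_le_iff₀ (by positivity)]
    nlinarith
  rw [← sub_nonneg, hid]
  positivity

section BernoulliLaplace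

variable {N : ℕ}

open Matrix

theorem BLKernel_apply_eq (x z : Fin (N + 1)) :
    BLKernel N x z = (if z = Fin.clamp (x - 1) N then ((x : ℝ) / N) ^ 2 else 0)
      + (if z = x then 2 * (x : ℕ) * ((N : ℝ) - (x : ℕ)) / N ^ 2 else 0)
      + (if z = Fin.clamp (x + 1) N then (((N : ℝ) - (x : ℕ)) / N) ^ 2 else 0) := by
  obtain ⟨x, hx⟩ := x
  obtain ⟨z, hz⟩ := z
  simp only [BLKernel, Fin.ext_iff, Fin.coe_clamp]
  split_ifs <;> first | omega | simp_all
  · obtain rfl : x = 0 := by omega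
    obtain rfl : N = 0 := by omega
    simp
  · omega
  · obtain rfl : x = N := by omega
    simp

theorem clampSeq_BLKernel_mulVec (w : Fin (N + 1) → ℝ) {i : ℕ} (hi : i ≤ N) :
    clampSeq (BLKernel N *ᵥ w) i
      = blRow N i (clampSeq w (i - 1)) (clampSeq w i) (clampSeq w (i + 1)) := by
  rw [clampSeq_of_le _ hi, clampSeq_of_le _ hi]
  simp only [mulVec, dotProduct, BLKernel_apply_eq, add_mul, ite_mul, zero_mul,
    sum_add_distrib, sum_ite_eq', mem_univ, if_true, clampSeq, blRow]

theorem BLKernel_mulVec_one (hN : 0 < N) : BLKernel N *ᵥ 1 = 1 := by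
  ext y
  rw [← clampSeq_val (BLKernel N *ᵥ 1) y,
    clampSeq_BLKernel_mulVec _ (Nat.lt_succ_iff.mp y.isLt)]
  exact blRow_const (by exact_mod_cast hN.ne') 1

noncomputable def lazyKernel (N : ℕ) : Matrix (Fin (N + 1)) (Fin (N + 1)) ℝ :=
  (2⁻¹ : ℝ) • (BLKernel N + 1)

theorem clampSeq_lazyKernel_mulVec (w : Fin (N + 1) → ℝ) {i : ℕ} (hi : i ≤ N) :
    clampSeq (lazyKernel N *ᵥ w) i = (clampSeq w i
      + blRow N i (clampSeq w (i - 1)) (clampSeq w i) (clampSeq w (i + 1))) / 2 := by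
  rw [← clampSeq_BLKernel_mulVec w hi]
  simp only [lazyKernel, smul_mulVec, add_mulVec, one_mulVec, clampSeq, Pi.smul_apply,
    Pi.add_apply, smul_eq_mul]
  ring

theorem lazyKernel_mulVec_nonneg {w : Fin (N + 1) → ℝ} (hw : 0 ≤ w) :
    0 ≤ lazyKernel N *ᵥ w := by
  intro y
  have hy := Nat.lt_succ_iff.mp y.isLt
  have hu : ∀ i, 0 ≤ clampSeq w i := fun i => hw _
  rw [Pi.zero_apply, ← clampSeq_val (lazyKernel N *ᵥ w) y, clampSeq_lazyKernel_mulVec w hy]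
  exact div_nonneg (add_nonneg (hu _) (blRow_nonneg (Nat.cast_nonneg _)
    (by exact_mod_cast hy) (hu _) (hu _) (hu _))) zero_le_two

theorem Monotone.lazyKernel_mulVec {w : Fin (N + 1) → ℝ} (hw : Monotone w) :
    Monotone (lazyKernel N *ᵥ w) := by
  have hu := hw.clampSeq
  refine Fin.monotone_iff_le_succ.2 fun i => ?_
  have hi : (i : ℕ) + 1 ≤ N := i.isLt
  rw [← clampSeq_val (lazyKernel N *ᵥ w) i.castSucc, ← clampSeq_val (lazyKernel N *ᵥ w) i.succ,
    Fin.val_castSucc, Fin.val_succ, clampSeq_lazyKernel_mulVec w (by omega),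
    clampSeq_lazyKernel_mulVec w hi, Nat.add_sub_cancel]
  push_cast
  have := blRow_step_mono (n := N) (x := i) (Nat.cast_nonneg _) (by exact_mod_cast hi)
    (hu (Nat.sub_le i 1)) (hu (Nat.le_succ i)) (hu (Nat.le_succ (i + 1)))
  linarith

theorem ConvexUpTo.lazyKernel_mulVec {w : Fin (N + 1) → ℝ}
    (hw : ConvexUpTo N (clampSeq w)) : ConvexUpTo N (clampSeq (lazyKernel N *ᵥ w)) := by
  intro i hi
  rw [clampSeq_lazyKernel_mulVec w (by omega), clampSeq_lazyKernel_mulVec w (by omega),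
    clampSeq_lazyKernel_mulVec w hi, Nat.add_sub_cancel, show i + 2 - 1 = i + 1 by omega]
  push_cast
  set u := clampSeq w
  have h₀ : 0 ≤ (i : ℝ) ^ 2 * (u (i + 1) - 2 * u i + u (i - 1)) := by
    rcases i with _ | i
    · simp
    · have := hw i (by omega)
      simp only [Nat.add_sub_cancel]
      exact mul_nonneg (sq_nonneg _) (by linarith)
  have h₂ : 0 ≤ ((N : ℝ) - i - 2) ^ 2 * (u (i + 3) - 2 * u (i + 2) + u (i + 1)) := by
    rcases (show i + 2 = N ∨ i + 3 ≤ N by omega) with h | h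
    · have : (N : ℝ) = i + 2 := by exact_mod_cast h.symm
      simp [this]
    · have := hw (i + 1) h
      exact mul_nonneg (sq_nonneg _) (by linarith)
  have := blRow_step_convex (n := N) (x := i) (Nat.cast_nonneg _) (by exact_mod_cast hi)
    h₀ (by linarith [hw i hi]) h₂
  linarith

theorem exp_smul_BLKernel_sub_one (t : ℝ) :
    NormedSpace.exp (t • (BLKernel N - 1))
      = Real.exp (-(2 * t)) • NormedSpace.exp ((2 * t) • lazyKernel N) := by
  rw [← exp_smul_sub_one]
  congr 1
  unfold lazyKernel
  module

noncomputable def heatCol (N : ℕ) (t : ℝ) : Fin (N + 1) → ℝ :=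
  NormedSpace.exp (t • (BLKernel N - 1)) *ᵥ Pi.single (Fin.last N) 1

theorem heatCol_apply (t : ℝ) (y : Fin (N + 1)) :
    heatCol N t y = NormedSpace.exp (t • (BLKernel N - 1)) y (Fin.last N) := by
  simp [heatCol]

theorem heatCol_nonneg_of_invariant {p : (Fin (N + 1) → ℝ) → Prop}
    (hL : ∀ w, p w → p (lazyKernel N *ᵥ w)) (hv : p (Pi.single (Fin.last N) 1))
    (ψ : (Fin (N + 1) → ℝ) →ₗ[ℝ] ℝ) (hψ : ∀ w, p w → 0 ≤ ψ w) {t : ℝ} (ht : 0 ≤ t) :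
    0 ≤ ψ (heatCol N t) := by
  rw [heatCol, exp_smul_BLKernel_sub_one, smul_mulVec, map_smul, smul_eq_mul]
  exact mul_nonneg (Real.exp_pos _).le
    (exp_smul_mulVec_nonneg_of_invariant hL hv ψ hψ (by linarith))

theorem single_last_nonneg : 0 ≤ (Pi.single (Fin.last N) 1 : Fin (N + 1) → ℝ) :=
  Pi.single_nonneg.2 zero_le_one

theorem heatCol_nonneg {t : ℝ} (ht : 0 ≤ t) : 0 ≤ heatCol N t := fun y =>
  heatCol_nonneg_of_invariant (p := fun w => 0 ≤ w) (fun _ => lazyKernel_mulVec_nonneg)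
    single_last_nonneg (LinearMap.proj y) (fun _ hw => hw y) ht

theorem heatCol_monotone {t : ℝ} (ht : 0 ≤ t) : Monotone (heatCol N t) := by
  have hsingle : Monotone (Pi.single (Fin.last N) (1 : ℝ)) := by
    refine Fin.monotone_iff_le_succ.2 fun i => ?_
    rw [Pi.single_eq_of_ne (Fin.castSucc_lt_last i).ne]
    exact single_last_nonneg _
  refine Fin.monotone_iff_le_succ.2 fun i => ?_
  have key := heatCol_nonneg_of_invariant (fun _ hw => hw.lazyKernel_mulVec) hsingle
    (LinearMap.proj (R := ℝ) (φ := fun _ : Fin (N + 1) => ℝ) i.succ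
      - LinearMap.proj i.castSucc) (fun _ hw => by
      simp only [LinearMap.sub_apply, LinearMap.proj_apply, sub_nonneg]
      exact hw (Fin.castSucc_le_succ i)) ht
  simpa only [LinearMap.sub_apply, LinearMap.proj_apply, sub_nonneg] using key

theorem heatCol_convexUpTo {t : ℝ} (ht : 0 ≤ t) : ConvexUpTo N (clampSeq (heatCol N t)) := by
  have hsingle : ConvexUpTo N (clampSeq (Pi.single (Fin.last N) (1 : ℝ))) := by
    intro i hi
    rw [clampSeq_of_le _ (by omega), clampSeq_of_le _ (by omega), clampSeq_of_le _ hi,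
      Pi.single_eq_of_ne (by simp [Fin.ext_iff]; omega), mul_zero]
    exact add_nonneg (single_last_nonneg _) (single_last_nonneg _)
  intro i hi
  have h₀ : i ≤ N := by omega
  have h₁ : i + 1 ≤ N := by omega
  have key := heatCol_nonneg_of_invariant (p := fun w => ConvexUpTo N (clampSeq w))
    (fun _ => ConvexUpTo.lazyKernel_mulVec) hsingle
    (LinearMap.proj ⟨i, Nat.lt_succ_of_le h₀⟩ + LinearMap.proj ⟨i + 2, Nat.lt_succ_of_le hi⟩
      - (2 : ℝ) • LinearMap.proj ⟨i + 1, Nat.lt_succ_of_le h₁⟩) (fun w hw => by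
        have := hw i hi
        rw [clampSeq_of_le _ h₀, clampSeq_of_le _ h₁, clampSeq_of_le _ hi] at this
        simp only [LinearMap.sub_apply, LinearMap.add_apply, LinearMap.smul_apply,
          LinearMap.proj_apply, smul_eq_mul]
        linarith) ht
  rw [clampSeq_of_le _ h₀, clampSeq_of_le _ h₁, clampSeq_of_le _ hi]
  simp only [LinearMap.sub_apply, LinearMap.add_apply, LinearMap.smul_apply,
    LinearMap.proj_apply, smul_eq_mul] at key
  linarith

theorem BLpi_pos (y : Fin (N + 1)) : 0 < BLpi N y := by
  have := Nat.choose_pos (Nat.lt_succ_iff.mp y.isLt)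
  have := Nat.choose_pos (by omega : N ≤ 2 * N)
  unfold BLpi
  positivity

theorem sum_BLpi : ∑ y, BLpi N y = 1 := by
  have hpos : (0 : ℝ) < (2 * N).choose N := by exact_mod_cast Nat.choose_pos (by omega)
  have hvandermonde : ∑ i ∈ range (N + 1), (N.choose i : ℝ) ^ 2 = (2 * N).choose N := by
    exact_mod_cast Nat.sum_range_choose_sq N
  simp only [BLpi]
  rw [← sum_div, Fin.sum_univ_eq_sum_range (fun i => (N.choose i : ℝ) ^ 2), hvandermonde,
    div_self hpos.ne']

theorem sum_BLpi_mul_val : ∑ y, BLpi N y * y = N / 2 := by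
  have hrev : ∑ y, BLpi N y * y = ∑ y, BLpi N y * (N - y) := by
    rw [← Equiv.sum_comp Fin.revPerm]
    refine sum_congr rfl fun y _ => ?_
    have hy := Nat.lt_succ_iff.mp y.isLt
    simp only [Fin.revPerm_apply, Fin.val_rev, BLpi,
      show N + 1 - (y + 1) = N - y by omega, Nat.choose_symm hy, Nat.cast_sub hy]
  have hsum : ∑ y, BLpi N y * y + ∑ y, BLpi N y * (N - y) = N := by
    rw [← sum_add_distrib]
    simp [← mul_add, ← sum_mul, sum_BLpi]
  linarith

theorem BLKernel_isReversible : IsReversible (BLpi N) (BLKernel N) := by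
  have hstep : ∀ y : ℕ, y + 1 ≤ N → (N.choose (y + 1) : ℝ) ^ 2 * ((y + 1 : ℕ) / N) ^ 2
      = N.choose y ^ 2 * ((N - y) / N) ^ 2 := by
    intro y hy
    rw [div_pow, div_pow, ← mul_div_assoc, ← mul_div_assoc, ← mul_pow, ← mul_pow,
      ← Nat.cast_sub (by omega)]
    congr 2
    exact_mod_cast Nat.choose_succ_right_eq N y
  rintro ⟨x, hx⟩ ⟨y, hy⟩
  simp only [BLKernel, BLpi, Fin.mk.injEq]
  split_ifs <;> first | omega | skip
  · obtain rfl : x = y + 1 := by omega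
    rw [div_mul_eq_mul_div, div_mul_eq_mul_div, hstep y (by omega)]
  · obtain rfl : y = x + 1 := by omega
    rw [div_mul_eq_mul_div, div_mul_eq_mul_div, hstep x (by omega)]
  · obtain rfl : x = y := by omega
    rfl
  · simp

theorem isReversible_exp_smul_BLKernel_sub_one (t : ℝ) :
    IsReversible (BLpi N) (NormedSpace.exp (t • (BLKernel N - 1))) :=
  (BLKernel_isReversible.smul_sub_one t).exp fun y => (BLpi_pos y).ne'

theorem sum_BLpi_mul_heatCol (hN : 0 < N) (t : ℝ) :
    ∑ y, BLpi N y * heatCol N t y = BLpi N (Fin.last N) := by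
  have hrows : NormedSpace.exp (t • (BLKernel N - 1)) *ᵥ 1 = 1 :=
    exp_mulVec_of_mulVec_eq_zero (by
      rw [smul_mulVec, sub_mulVec, one_mulVec, BLKernel_mulVec_one hN, sub_self, smul_zero])
  have hlast := congr_fun hrows (Fin.last N)
  simp only [mulVec, dotProduct, Pi.one_apply, mul_one] at hlast
  simp_rw [heatCol_apply, ← isReversible_exp_smul_BLKernel_sub_one t (Fin.last N), ← mul_sum,
    hlast, mul_one]

theorem half_mul_slope_le_sum_BLpi_mul {w : Fin (N + 1) → ℝ}
    (hw : ConvexUpTo N (clampSeq w)) :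
    (N / 2 : ℝ) * (clampSeq w 1 - w 0) ≤ ∑ y, BLpi N y * w y - w 0 :=
  calc (N / 2 : ℝ) * (clampSeq w 1 - w 0)
      = ∑ y, BLpi N y * (y * (clampSeq w 1 - clampSeq w 0)) := by
        simp_rw [clampSeq_zero, ← mul_assoc, ← sum_mul, sum_BLpi_mul_val]
    _ ≤ ∑ y, BLpi N y * (clampSeq w y - clampSeq w 0) :=
        sum_le_sum fun y _ => mul_le_mul_of_nonneg_left
          (hw.mul_sub_le (Nat.lt_succ_iff.mp y.isLt)) (BLpi_pos y).le
    _ = ∑ y, BLpi N y * w y - w 0 := by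
        simp [clampSeq_val, clampSeq_zero, mul_sub, sum_sub_distrib, ← sum_mul, sum_BLpi]

theorem heatCol_slope_nonneg {t : ℝ} (ht : 0 ≤ t) :
    0 ≤ clampSeq (heatCol N t) 1 - heatCol N t 0 := by
  rw [sub_nonneg, ← clampSeq_zero (heatCol N t)]
  exact (heatCol_monotone ht).clampSeq zero_le_one

theorem heatCol_slope_le (hN : 0 < N) {t : ℝ} (ht : 0 ≤ t) :
    clampSeq (heatCol N t) 1 - heatCol N t 0
      ≤ 2 / N * (BLpi N (Fin.last N) - heatCol N t 0) := by
  have h := half_mul_slope_le_sum_BLpi_mul (heatCol_convexUpTo (N := N) ht)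
  rw [sum_BLpi_mul_heatCol hN] at h
  have hN' : (0 : ℝ) < N := by exact_mod_cast hN
  calc clampSeq (heatCol N t) 1 - heatCol N t 0
      = 2 / N * (N / 2 * (clampSeq (heatCol N t) 1 - heatCol N t 0)) := by field_simp
    _ ≤ 2 / N * (BLpi N (Fin.last N) - heatCol N t 0) := by gcongr

theorem hasDerivAt_heatCol_zero (hN : 0 < N) (t : ℝ) :
    HasDerivAt (fun u => heatCol N u 0) (clampSeq (heatCol N t) 1 - heatCol N t 0) t := by
  have h : HasDerivAt (fun u => heatCol N u 0) (((BLKernel N - 1) *ᵥ heatCol N t) 0) t :=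
    hasDerivAt_pi.1
      (hasDerivAt_exp_smul_mulVec (BLKernel N - 1) (Pi.single (Fin.last N) 1) t) 0
  refine h.congr_deriv ?_
  rw [sub_mulVec, one_mulVec, Pi.sub_apply, ← clampSeq_zero (BLKernel N *ᵥ _),
    clampSeq_BLKernel_mulVec _ (Nat.zero_le N), clampSeq_zero]
  have : (N : ℝ) ≠ 0 := by exact_mod_cast hN.ne'
  simp [blRow, this]

theorem BLsepEndpoint_eq {t : ℝ} (ht : 0 ≤ t) :
    BLsepEndpoint N t = 1 - heatCol N t 0 / BLpi N (Fin.last N) := by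
  have hratio : ∀ y, NormedSpace.exp (t • (BLKernel N - 1)) (Fin.last N) y / BLpi N y
      = heatCol N t y / BLpi N (Fin.last N) := fun y => by
    rw [div_eq_div_iff (BLpi_pos y).ne' (BLpi_pos _).ne', heatCol_apply, mul_comm,
      isReversible_exp_smul_BLKernel_sub_one t (Fin.last N) y, mul_comm]
  simp only [BLsepEndpoint, hratio]
  refine le_antisymm (ciSup_le fun y => ?_)
    (le_ciSup (f := fun y => 1 - heatCol N t y / BLpi N (Fin.last N))
      (Set.finite_range _).bddAbove 0)
  gcongr
  · exact (BLpi_pos _).le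
  · exact heatCol_monotone ht (Fin.zero_le y)

theorem BLsepEndpoint_le_one {t : ℝ} (ht : 0 ≤ t) : BLsepEndpoint N t ≤ 1 := by
  rw [BLsepEndpoint_eq ht, sub_le_self_iff]
  exact div_nonneg (heatCol_nonneg ht 0) (BLpi_pos _).le

theorem BLsepEndpoint_comparison (hN : 0 < N) {t t' : ℝ} (ht : 0 ≤ t) (htt' : t ≤ t') :
    BLsepEndpoint N t' ≤ BLsepEndpoint N t ∧
      Real.exp (2 / N * (t - t')) * BLsepEndpoint N t ≤ BLsepEndpoint N t' := by
  set π := BLpi N (Fin.last N)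
  have hπ : 0 < π := BLpi_pos _
  set g : ℝ → ℝ := fun u => 1 - heatCol N u 0 / π
  have hg : ∀ u, HasDerivAt g (-((clampSeq (heatCol N u) 1 - heatCol N u 0) / π)) u :=
    fun u => ((hasDerivAt_heatCol_zero hN u).div_const π).const_sub 1
  have hanti : AntitoneOn g (Set.Ici 0) :=
    antitoneOn_of_hasDerivWithinAt_nonpos (convex_Ici 0)
      (fun u _ => (hg u).continuousAt.continuousWithinAt) (fun u _ => (hg u).hasDerivWithinAt)
      fun u hu => by
        rw [interior_Ici] at hu
        exact neg_nonpos.2 (div_nonneg (heatCol_slope_nonneg hu.le) hπ.le)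
  have hmono := monotoneOn_exp_mul_of_hasDerivAt hg fun u hu => by
    rw [neg_le_neg_iff]
    calc (clampSeq (heatCol N u) 1 - heatCol N u 0) / π
        ≤ 2 / N * (π - heatCol N u 0) / π := by gcongr; exact heatCol_slope_le hN hu.le
      _ = 2 / N * g u := by simp only [g]; field_simp
  have ht' : t' ∈ Set.Ici (0 : ℝ) := le_trans ht htt'
  rw [BLsepEndpoint_eq ht, BLsepEndpoint_eq ht']
  refine ⟨hanti ht ht' htt', ?_⟩
  calc Real.exp (2 / N * (t - t')) * g t
      = Real.exp (-(2 / N * t')) * (Real.exp (2 / N * t) * g t) := by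
        rw [← mul_assoc, ← Real.exp_add]; ring_nf
    _ ≤ Real.exp (-(2 / N * t')) * (Real.exp (2 / N * t') * g t') :=
        mul_le_mul_of_nonneg_left (hmono ht ht' htt') (Real.exp_pos _).le
    _ = g t' := by rw [← mul_assoc, ← Real.exp_add, neg_add_cancel, Real.exp_zero, one_mul]

end BernoulliLaplace

theorem eventually_pos_and_cutoff_nonneg {N : ℕ → ℕ} (hN : Tendsto N atTop atTop) (c : ℝ) :
    ∀ᶠ k in atTop, 0 < N k ∧ 0 ≤ (2 * N k : ℝ) / 4 * (Real.log (2 * N k) + c) := by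
  have hNR : Tendsto (fun k => (N k : ℝ)) atTop atTop := tendsto_natCast_atTop_atTop.comp hN
  filter_upwards [hNR.eventually_ge_atTop (max 1 (Real.exp (-c)))] with k hk
  have h1 : (1 : ℝ) ≤ N k := le_of_max_le_left hk
  refine ⟨by exact_mod_cast h1, mul_nonneg (by positivity) ?_⟩
  have : -c ≤ Real.log (2 * N k) := by
    rw [Real.le_log_iff_exp_le (by positivity)]
    linarith [le_of_max_le_right hk]
  linarith

theorem bernoulli_laplace_profile_continuity_general
    (N : ℕ → ℕ) (hN_mono : StrictMono N)
    (Φ : ℝ → ℝ)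
    (hΦ : ∀ c : ℝ, Tendsto (fun k =>
        BLsepEndpoint (N k)
          (((2 * N k : ℝ)) / 4 * (Real.log (2 * N k) + c))) atTop (nhds (Φ c))) :
    Continuous Φ := by
  set τ : ℝ → ℕ → ℝ := fun c k => (2 * N k : ℝ) / 4 * (Real.log (2 * N k) + c)
  have hev := eventually_pos_and_cutoff_nonneg hN_mono.tendsto_atTop
  have hcmp : ∀ a b, a ≤ b → ∀ᶠ k in atTop,
      BLsepEndpoint (N k) (τ b k) ≤ BLsepEndpoint (N k) (τ a k) ∧
        Real.exp (a - b) * BLsepEndpoint (N k) (τ a k) ≤ BLsepEndpoint (N k) (τ b k) := by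
    intro a b hab
    filter_upwards [hev a] with k ⟨hNk, hτ⟩
    have hscale : 2 / (N k : ℝ) * (τ a k - τ b k) = a - b := by
      field_simp [τ]; ring
    rw [← hscale]
    exact BLsepEndpoint_comparison hNk hτ (by simp only [τ]; gcongr)
  refine (lipschitzWith_one_of_antitone_of_exp_sub_mul_le (fun a b hab => ?_) (fun a => ?_)
    (fun a b hab => ?_)).continuous
  · exact le_of_tendsto_of_tendsto (hΦ b) (hΦ a) ((hcmp a b hab).mono fun _ h => h.1)
  · exact le_of_tendsto (hΦ a) ((hev a).mono fun _ h => BLsepEndpoint_le_one h.2)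
  · exact le_of_tendsto_of_tendsto ((hΦ a).const_mul _) (hΦ b)
      ((hcmp a b hab).mono fun _ h => h.2)

theorem bernoulli_laplace_profile_continuity
    (N : ℕ → ℕ) (hN_pos : ∀ k, 0 < N k) (hN_mono : StrictMono N)
    (Φ : ℝ → ℝ)
    (hΦ : ∀ c : ℝ, Tendsto (fun k =>
        BLsepEndpoint (N k)
          (((2 * N k : ℝ)) / 4 * (Real.log (2 * N k) + c))) atTop (nhds (Φ c))) :
    Continuous Φ :=
  bernoulli_laplace_profile_continuity_general N hN_mono Φ hΦ
end
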